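/- Let D be an n×n doubly stochastic matrix and P a permutation matrix obtained as a perfect matching in the bipartite support graph of D (i.e., D_{i,π(i)} > 0 for all i). Let α be the minimum of the entries {D_{i,π(i)} : i}. Then α > 0, α ≤ 1, and (D − α P)/(1 − α) is doubly stochastic whenever α < 1; if α = 1 then D = P. -/
import Mathlib


/-- A real square matrix is doubly stochastic if its entries are nonnegative and all
row and column sums equal `1`. -/
def IsDoublyStochastic {n : ℕ} (D : Matrix (Fin n) (Fin n) ℝ) : Prop :=
  (∀ i j, 0 ≤ D i j) ∧ (∀ i, ∑ j, D i j = 1) ∧ (∀ j, ∑ i, D i j = 1)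

lemma permMatrix_apply {n : ℕ} (π : Equiv.Perm (Fin n)) (i j : Fin n) :
    Equiv.Perm.permMatrix ℝ π i j = if π i = j then 1 else 0 := by
  simp [Equiv.Perm.permMatrix, PEquiv.toMatrix, Equiv.toPEquiv]

/-- One step of Birkhoff–von Neumann extraction: if `D` is doubly stochastic, `π` is a
perfect matching in the support of `D` (i.e. `D i (π i) > 0` for all `i`), and `α` is the
minimum of the entries `D i (π i)`, then `0 < α ≤ 1`, `(D − α P)/(1 − α)` is doubly
stochastic when `α < 1`, and `D = P` when `α = 1`. -/
theorem birkhoff_step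
    (n : ℕ) (D : Matrix (Fin n) (Fin n) ℝ) (hD : IsDoublyStochastic D)
    (π : Equiv.Perm (Fin n)) (hsupp : ∀ i, 0 < D i (π i))
    (α : ℝ) (hα : IsLeast (Set.range fun i => D i (π i)) α) :
    0 < α ∧ α ≤ 1 ∧
    (α < 1 → IsDoublyStochastic ((1 - α)⁻¹ • (D - α • Equiv.Perm.permMatrix ℝ π))) ∧
    (α = 1 → D = Equiv.Perm.permMatrix ℝ π) := by
  obtain ⟨⟨i₀, hi₀⟩, hlb⟩ := hα
  obtain ⟨hpos, hrow, hcol⟩ := hD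
  have hαle : ∀ i, α ≤ D i (π i) := fun i => hlb ⟨i, rfl⟩
  have hαpos : 0 < α := hi₀ ▸ hsupp i₀
  have hrowsum : ∀ i, ∑ j, Equiv.Perm.permMatrix ℝ π i j = 1 := by
    intro i
    simp only [permMatrix_apply]
    simp
  have hcolsum : ∀ j, ∑ i, Equiv.Perm.permMatrix ℝ π i j = 1 := by
    intro j
    simp only [permMatrix_apply, Equiv.apply_eq_iff_eq_symm_apply]
    simp
  have hα1 : α ≤ 1 := by
    calc α ≤ D i₀ (π i₀) := hαle i₀
    _ ≤ ∑ j, D i₀ j := Finset.single_le_sum (fun j _ => hpos i₀ j) (Finset.mem_univ _)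
    _ = 1 := hrow i₀
  refine ⟨hαpos, hα1, ?_, ?_⟩
  · intro hlt
    have h1 : (0:ℝ) < 1 - α := by linarith
    refine ⟨?_, ?_, ?_⟩
    · intro i j
      simp only [Matrix.smul_apply, Matrix.sub_apply, permMatrix_apply, smul_eq_mul]
      apply mul_nonneg (le_of_lt (inv_pos.mpr h1))
      by_cases h : π i = j
      · subst h; simp; linarith [hαle i]
      · simp [h]; exact hpos i j
    · intro i
      simp only [Matrix.smul_apply, Matrix.sub_apply, smul_eq_mul]
      rw [← Finset.mul_sum, Finset.sum_sub_distrib, ← Finset.mul_sum,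
        hrow i, hrowsum i]
      field_simp
    · intro j
      simp only [Matrix.smul_apply, Matrix.sub_apply, smul_eq_mul]
      rw [← Finset.mul_sum, Finset.sum_sub_distrib, ← Finset.mul_sum,
        hcol j, hcolsum j]
      field_simp
  · intro h1
    subst h1
    ext i j
    rw [permMatrix_apply]
    by_cases h : π i = j
    · subst h
      have hzero : ∑ j ∈ Finset.univ.erase (π i), D i j = 0 := by
        have := hrow i
        rw [← Finset.add_sum_erase _ _ (Finset.mem_univ (π i))] at this
        have hnn : (0:ℝ) ≤ ∑ j ∈ Finset.univ.erase (π i), D i j :=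
          Finset.sum_nonneg fun j _ => hpos i j
        linarith [hαle i]
      have h2 : ∀ j ∈ Finset.univ.erase (π i), D i j = 0 :=
        (Finset.sum_eq_zero_iff_of_nonneg (fun j _ => hpos i j)).1 hzero
      have := hrow i
      rw [← Finset.add_sum_erase _ _ (Finset.mem_univ (π i)), hzero] at this
      simpa using this
    · have hzero : ∑ k ∈ Finset.univ.erase (π i), D i k = 0 := by
        have := hrow i
        rw [← Finset.add_sum_erase _ _ (Finset.mem_univ (π i))] at this
        have hnn : (0:ℝ) ≤ ∑ k ∈ Finset.univ.erase (π i), D i k :=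
          Finset.sum_nonneg fun k _ => hpos i k
        linarith [hαle i]
      have h2 := (Finset.sum_eq_zero_iff_of_nonneg (fun k _ => hpos i k)).1 hzero
      simp only [h, if_false]
      exact h2 j (Finset.mem_erase.2 ⟨fun hj => h (hj ▸ rfl), Finset.mem_univ j⟩)
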